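/- arXiv:2006.14935 — 2 statements merged into one kernel-verified Lean document; each statement's English description precedes it below -/
import Mathlib

section
/- Let z₁, z₂, m, w ∈ ℍ and t > 0. Assume m is the midpoint of z₁ and z₂, i.e. d(z₁,m) = d(m,z₂) = d(z₁,z₂)/2, and assume d(w,z₁) ≤ t and d(w,z₂) ≤ t. Then cosh(d(w,m)) · cosh(d(z₁,z₂)/2) ≤ cosh t. -/
/-!
Let `s = cosh (d(z₁, z₂) / 2)` and `m = p + i q`. The midpoint conditions force
`(z₁ - p) (z₂ - p) = -q²`, i.e. the half-turn `z ↦ p - q² / (z - p)` about `m` exchanges `z₁` and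
`z₂`. Together with `cosh d(z, w) = ((Re z - Re w)² + Im z ² + Im w ²) / (2 Im z Im w)` this gives
the hyperbolic median identity `cosh d(w, z₁) + cosh d(w, z₂) = 2 s cosh d(w, m)`, and both terms
on the left are at most `cosh t`.
-/

open UpperHalfPlane

namespace UpperHalfPlane

lemma two_mul_im_mul_im_mul_cosh_dist (z w : ℍ) :
    2 * z.im * w.im * Real.cosh (dist z w) = (z.re - w.re) ^ 2 + z.im ^ 2 + w.im ^ 2 := by
  rw [cosh_dist', mul_div_cancel₀ _ (by positivity)]

variable {z₁ z₂ m : ℍ}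

lemma cosh_dist_eq_of_dist_eq_half (hm₁ : dist z₁ m = dist z₁ z₂ / 2) :
    Real.cosh (dist z₁ z₂) = 2 * Real.cosh (dist z₁ m) ^ 2 - 1 := by
  rw [hm₁, ← mul_div_cancel₀ (dist z₁ z₂) two_ne_zero, Real.cosh_two_mul, Real.sinh_sq,
    mul_div_cancel₀ _ two_ne_zero]
  ring

lemma sub_re_mul_sub_re_eq_neg_im_sq_of_midpoint (hm₁ : dist z₁ m = dist z₁ z₂ / 2)
    (hm₂ : dist m z₂ = dist z₁ z₂ / 2) :
    ((z₁ : ℂ) - m.re) * ((z₂ : ℂ) - m.re) = -(m.im : ℂ) ^ 2 := by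
  have h₁ := two_mul_im_mul_im_mul_cosh_dist z₁ m
  have h₂ := two_mul_im_mul_im_mul_cosh_dist z₂ m
  have h₃ := two_mul_im_mul_im_mul_cosh_dist z₁ z₂
  rw [dist_comm, hm₂, ← hm₁] at h₂
  rw [cosh_dist_eq_of_dist_eq_half hm₁] at h₃
  -- `|(z₁ - p) (z₂ - p) + q²|²` is a combination of the three distance relations.
  rw [← sub_eq_zero, ← Complex.normSq_eq_zero]
  simp only [← Complex.ofReal_pow, sub_neg_eq_add, Complex.normSq_apply, Complex.add_re,
    Complex.mul_re, Complex.sub_re, coe_re, Complex.ofReal_re, Complex.sub_im, coe_im,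
    Complex.ofReal_im, sub_zero, Complex.add_im, Complex.mul_im, add_zero]
  linear_combination -((z₂.re - m.re) ^ 2 + z₂.im ^ 2 + m.im ^ 2) * h₁
    - 2 * z₁.im * m.im * Real.cosh (dist z₁ m) * h₂ + m.im ^ 2 * h₃

lemma cosh_dist_add_cosh_dist_of_midpoint (w : ℍ) (hm₁ : dist z₁ m = dist z₁ z₂ / 2)
    (hm₂ : dist m z₂ = dist z₁ z₂ / 2) :
    Real.cosh (dist w z₁) + Real.cosh (dist w z₂) =
      2 * Real.cosh (dist w m) * Real.cosh (dist z₁ z₂ / 2) := by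
  have halfTurn := sub_re_mul_sub_re_eq_neg_im_sq_of_midpoint hm₁ hm₂
  have hre := congrArg Complex.re halfTurn
  have him := congrArg Complex.im halfTurn
  simp only [Complex.mul_re, Complex.sub_re, coe_re, Complex.ofReal_re, Complex.sub_im, coe_im,
    Complex.ofReal_im, sub_zero, ← Complex.ofReal_pow, Complex.neg_re, Complex.mul_im,
    Complex.neg_im, neg_zero] at hre him
  have h₁ := two_mul_im_mul_im_mul_cosh_dist z₁ m
  have im_add_mul_im : (z₁.im + z₂.im) * m.im = 2 * z₁.im * z₂.im * Real.cosh (dist z₁ m) := by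
    refine mul_right_cancel₀ m.im_pos.ne' ?_
    linear_combination -z₂.im * h₁ + z₁.im * hre - (z₁.re - m.re) * him
  rw [← hm₁, cosh_dist', cosh_dist', cosh_dist']
  field_simp
  linear_combination ((w.re - m.re) ^ 2 + w.im ^ 2 + m.im ^ 2) * im_add_mul_im
    + m.im * (z₁.re + z₂.re - 2 * w.re) * him - m.im * (z₁.im + z₂.im) * hre

end UpperHalfPlane

theorem hyperbolic_pythagoras_estimate_general (z₁ z₂ m w : UpperHalfPlane) (t : ℝ)
    (hm₁ : dist z₁ m = dist z₁ z₂ / 2) (hm₂ : dist m z₂ = dist z₁ z₂ / 2)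
    (hw₁ : dist w z₁ ≤ t) (hw₂ : dist w z₂ ≤ t) :
    Real.cosh (dist w m) * Real.cosh (dist z₁ z₂ / 2) ≤ Real.cosh t := by
  have cosh_le {z : ℍ} (hz : dist w z ≤ t) : Real.cosh (dist w z) ≤ Real.cosh t :=
    Real.cosh_strictMonoOn.monotoneOn dist_nonneg (dist_nonneg.trans hz) hz
  have median := cosh_dist_add_cosh_dist_of_midpoint w hm₁ hm₂
  linarith [cosh_le hw₁, cosh_le hw₂]

/-- **Hyperbolic Pythagoras estimate.** If `m` is the midpoint of `z₁` and `z₂` in the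
hyperbolic upper half-plane and `w` lies within hyperbolic distance `t` of both `z₁` and
`z₂`, then `cosh (d(w, m)) * cosh (d(z₁, z₂) / 2) ≤ cosh t`. -/
theorem hyperbolic_pythagoras_estimate (z₁ z₂ m w : UpperHalfPlane) (t : ℝ) (ht : 0 < t)
    (hm₁ : dist z₁ m = dist z₁ z₂ / 2) (hm₂ : dist m z₂ = dist z₁ z₂ / 2)
    (hw₁ : dist w z₁ ≤ t) (hw₂ : dist w z₂ ≤ t) :
    Real.cosh (dist w m) * Real.cosh (dist z₁ z₂ / 2) ≤ Real.cosh t :=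
  hyperbolic_pythagoras_estimate_general z₁ z₂ m w t hm₁ hm₂ hw₁ hw₂
end

section
/- There exists a universal constant C > 0 such that for all z₁, z₂ ∈ ℍ and all t > 0, the hyperbolic area of the intersection of the two closed balls of radius t centred at z₁ and z₂ satisfies μ(B(z₁,t) ∩ B(z₂,t)) ≤ C · e^{t − d(z₁,z₂)/2}. -/
open MeasureTheory UpperHalfPlane

/-- The Borel measurable structure on the upper half-plane, induced from `ℂ`. -/
noncomputable instance : MeasurableSpace UpperHalfPlane :=
  MeasurableSpace.comap ((↑) : ℍ → ℂ) inferInstance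

/-- The hyperbolic area measure on the upper half-plane: the measure with density
`(Im z)⁻²` with respect to the two-dimensional Lebesgue measure. -/
noncomputable def hypArea : Measure ℍ :=
  (Measure.comap ((↑) : ℍ → ℂ) volume).withDensity
    (fun z => ENNReal.ofReal (1 / z.im ^ 2))

/-!
By the hyperbolic Apollonius identity
`cosh d(w, z₁) + cosh d(w, z₂) = 2 cosh (r / 2) cosh d(w, m)`, with `m` the midpoint of `z₁`
and `z₂` and `r = d(z₁, z₂)`, the intersection of the two balls lies in every ball around `m`
whose radius `ρ ≥ 0` satisfies `cosh ρ ≥ cosh t / cosh (r / 2)`. As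
`cosh t / cosh (r / 2) ≤ 2 e^{t - r/2}` and `cosh ρ ≥ e^ρ / 2`, the radius
`ρ = t - r/2 + log 4` will do. A hyperbolic ball of radius `ρ` is a Euclidean disc whose lowest
and highest points are at heights `y₀ e^{-ρ}` and `y₀ e^ρ`; the horizontal chord at height `y`
has length at most `2 √(y₀ e^ρ y)`, and integrating it against `dy / y²` from `y₀ e^{-ρ}`
bounds the area of the ball by `4 e^ρ`.
-/

open Set Real

theorem Real.exp_div_two_le_cosh (x : ℝ) : exp x / 2 ≤ cosh x := by
  rw [cosh_eq]
  linarith [exp_pos (-x)]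

theorem Real.cosh_le_exp {x : ℝ} (hx : 0 ≤ x) : cosh x ≤ exp x := by
  rw [cosh_eq]
  linarith [exp_le_exp.2 (show -x ≤ x by linarith)]

theorem hypArea_eq_volume : hypArea = (volume : Measure ℍ) := by
  rw [UpperHalfPlane.volume_def, hypArea]
  congr 1
  funext z
  rw [← ENNReal.ofReal_coe_nnreal]
  congr 1
  push_cast
  ring

theorem hypArea_apply (s : Set ℍ) :
    hypArea s = ∫⁻ w in ((↑) : ℍ → ℂ) '' s, ENNReal.ofReal (1 / w.im ^ 2) := by
  rw [hypArea_eq_volume, volume_eq_lintegral]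
  congr 1
  funext w
  rw [← ENNReal.ofReal_coe_nnreal]
  congr 1
  simp

theorem Complex.setLIntegral_comp_im {S : Set ℂ} (hS : MeasurableSet S) {g : ℝ → ENNReal}
    (hg : Measurable g) :
    ∫⁻ w in S, g w.im = ∫⁻ y, g y * volume {x : ℝ | (⟨x, y⟩ : ℂ) ∈ S} := by
  rw [← lintegral_indicator hS,
    ← (Complex.volume_preserving_equiv_real_prod.symm).lintegral_comp_emb
      Complex.measurableEquivRealProd.symm.measurableEmbedding,
    Measure.volume_eq_prod, lintegral_prod_symm]
  · congr 1
    funext y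
    have hslice : MeasurableSet {x : ℝ | (⟨x, y⟩ : ℂ) ∈ S} :=
      hS.preimage (Complex.measurableEquivRealProd.symm.measurable.comp measurable_prodMk_right)
    rw [← lintegral_indicator_const hslice]
    rfl
  · exact ((hg.comp Complex.measurable_im).indicator hS).comp
      Complex.measurableEquivRealProd.symm.measurable |>.aemeasurable

theorem Complex.volume_slice_closedBall_le (c : ℂ) (R y : ℝ) :
    volume {x : ℝ | (⟨x, y⟩ : ℂ) ∈ Metric.closedBall c R} ≤
      ENNReal.ofReal (2 * √(R ^ 2 - (y - c.im) ^ 2)) := by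
  rw [← Real.volume_closedBall c.re]
  refine measure_mono fun x hx => ?_
  rw [mem_ofPred_eq, Metric.mem_closedBall, Complex.dist_eq_re_im] at hx
  have hR : 0 ≤ R := (sqrt_nonneg _).trans hx
  have hx' := (sqrt_le_left hR).1 hx
  simp only at hx'
  rw [Metric.mem_closedBall, Real.dist_eq]
  exact abs_le_sqrt (by linarith)

theorem lintegral_Ioi_rpow_of_lt {a c : ℝ} (ha : a < -1) (hc : 0 < c) :
    ∫⁻ y in Ioi c, ENNReal.ofReal (y ^ a) = ENNReal.ofReal (-c ^ (a + 1) / (a + 1)) := by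
  rw [← ofReal_integral_eq_lintegral_ofReal (integrableOn_Ioi_rpow_of_lt ha hc),
    integral_Ioi_rpow_of_lt ha hc]
  filter_upwards [ae_restrict_mem measurableSet_Ioi] with y hy
  exact rpow_nonneg (hc.trans hy).le a

theorem one_div_sq_mul_sqrt_le_indicator {P R : ℝ} (hR : 0 ≤ R) (hRP : R < P) (y : ℝ) :
    ENNReal.ofReal (1 / y ^ 2) * ENNReal.ofReal (2 * √(R ^ 2 - (y - P) ^ 2)) ≤
      (Ioi (P - R)).indicator
        (fun y => ENNReal.ofReal (2 * √(P + R)) * ENNReal.ofReal (y ^ (-(3 / 2) : ℝ))) y := by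
  by_cases hy : y ∈ Ioi (P - R)
  · have hy0 : 0 < y := (sub_pos.2 hRP).trans hy
    have hchord : R ^ 2 - (y - P) ^ 2 ≤ (P + R) * y := by
      have : P - R < y := hy
      nlinarith
    have hrpow : y ^ (-(3 / 2) : ℝ) = √y / y ^ 2 := by
      rw [sqrt_eq_rpow, ← rpow_natCast y 2, ← rpow_sub hy0]
      norm_num
    rw [indicator_of_mem hy, ← ENNReal.ofReal_mul (by positivity),
      ← ENNReal.ofReal_mul (by positivity)]
    refine ENNReal.ofReal_le_ofReal ?_
    calc 1 / y ^ 2 * (2 * √(R ^ 2 - (y - P) ^ 2))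
        ≤ 1 / y ^ 2 * (2 * (√(P + R) * √y)) := by
          gcongr
          rw [← sqrt_mul' _ hy0.le]
          exact sqrt_le_sqrt hchord
      _ = 2 * √(P + R) * y ^ (-(3 / 2) : ℝ) := by rw [hrpow]; ring
  · have hchord : R ^ 2 - (y - P) ^ 2 ≤ 0 := by
      have : y ≤ P - R := not_lt.1 hy
      nlinarith
    simp [indicator_of_notMem hy, sqrt_eq_zero'.2 hchord]

theorem setLIntegral_closedBall_one_div_im_sq_le (c : ℂ) {R : ℝ} (hR : 0 ≤ R) (hRc : R < c.im) :
    ∫⁻ w in Metric.closedBall c R, ENNReal.ofReal (1 / w.im ^ 2) ≤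
      ENNReal.ofReal (4 * √((c.im + R) / (c.im - R))) := by
  have hc : 0 < c.im - R := sub_pos.2 hRc
  have hg : Measurable fun y : ℝ => ENNReal.ofReal (1 / y ^ 2) := by
    fun_prop (disch := assumption) [Measurable.ennreal_ofReal]
  calc ∫⁻ w in Metric.closedBall c R, ENNReal.ofReal (1 / w.im ^ 2)
      = ∫⁻ y, ENNReal.ofReal (1 / y ^ 2) *
          volume {x : ℝ | (⟨x, y⟩ : ℂ) ∈ Metric.closedBall c R} :=
        Complex.setLIntegral_comp_im measurableSet_closedBall hg
    _ ≤ ∫⁻ y, (Ioi (c.im - R)).indicator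
          (fun y => ENNReal.ofReal (2 * √(c.im + R)) * ENNReal.ofReal (y ^ (-(3 / 2) : ℝ))) y :=
        lintegral_mono fun y =>
          le_trans (by gcongr; exact Complex.volume_slice_closedBall_le c R y)
            (one_div_sq_mul_sqrt_le_indicator hR hRc y)
    _ = ENNReal.ofReal (2 * √(c.im + R)) *
          ∫⁻ y in Ioi (c.im - R), ENNReal.ofReal (y ^ (-(3 / 2) : ℝ)) := by
        rw [lintegral_indicator measurableSet_Ioi, lintegral_const_mul]
        fun_prop
    _ = ENNReal.ofReal (4 * √((c.im + R) / (c.im - R))) := by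
        rw [lintegral_Ioi_rpow_of_lt (by norm_num) hc, ← ENNReal.ofReal_mul (by positivity),
          sqrt_div' _ hc.le, sqrt_eq_rpow (c.im - R),
          show (-(3 / 2) : ℝ) + 1 = -(1 / 2) by norm_num, rpow_neg hc.le]
        ring_nf

theorem hypArea_closedBall_le (z : ℍ) (ρ : ℝ) :
    hypArea (Metric.closedBall z ρ) ≤ ENNReal.ofReal (4 * exp ρ) := by
  rcases lt_or_ge ρ 0 with hρ | hρ
  · simp [Metric.closedBall_eq_empty.2 hρ]
  rw [hypArea_apply, image_coe_closedBall]
  refine (setLIntegral_closedBall_one_div_im_sq_le _ (by positivity) ?_).trans_eq ?_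
  · rw [coe_im, center_im]
    exact mul_lt_mul_of_pos_left (sinh_lt_cosh ρ) z.im_pos
  · rw [coe_im, center_im, ← mul_add, ← mul_sub, cosh_add_sinh, cosh_sub_sinh,
      mul_div_mul_left _ _ z.im_ne_zero, ← exp_sub, sub_neg_eq_add, exp_add,
      sqrt_mul_self (exp_pos ρ).le]

/-- The midpoint of the geodesic segment from `z` to `w`. -/
noncomputable def hypMidpoint (z w : ℍ) : ℍ :=
  UpperHalfPlane.mk ⟨(z.re * w.im + w.re * z.im) / (z.im + w.im),
    2 * z.im * w.im / (z.im + w.im) * cosh (dist z w / 2)⟩ (by dsimp only; positivity)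

theorem cosh_dist_add_cosh_dist (z₁ z₂ w : ℍ) :
    cosh (dist w z₁) + cosh (dist w z₂) =
      2 * cosh (dist z₁ z₂ / 2) * cosh (dist w (hypMidpoint z₁ z₂)) := by
  have hK : cosh (dist z₁ z₂ / 2) ^ 2 = (cosh (dist z₁ z₂) + 1) / 2 := by
    have h := cosh_two_mul (dist z₁ z₂ / 2)
    rw [mul_div_cancel₀ _ two_ne_zero] at h
    linarith [cosh_sq (dist z₁ z₂ / 2)]
  rw [cosh_dist', cosh_dist', cosh_dist']
  simp only [hypMidpoint, mk_re, mk_im]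
  field_simp
  rw [hK, cosh_dist']
  field_simp
  ring

theorem cosh_dist_hypMidpoint_le {z₁ z₂ w : ℍ} {t : ℝ} (h₁ : dist w z₁ ≤ t)
    (h₂ : dist w z₂ ≤ t) :
    cosh (dist w (hypMidpoint z₁ z₂)) ≤ cosh t / cosh (dist z₁ z₂ / 2) := by
  have hcosh : ∀ {z : ℍ}, dist w z ≤ t → cosh (dist w z) ≤ cosh t := fun h =>
    cosh_le_cosh.2 <| by rw [abs_of_nonneg dist_nonneg]; exact h.trans (le_abs_self t)
  rw [le_div_iff₀ (cosh_pos _)]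
  linarith [cosh_dist_add_cosh_dist z₁ z₂ w, hcosh h₁, hcosh h₂]

theorem inter_closedBall_subset_closedBall_hypMidpoint (z₁ z₂ : ℍ) (t : ℝ) :
    Metric.closedBall z₁ t ∩ Metric.closedBall z₂ t ⊆
      Metric.closedBall (hypMidpoint z₁ z₂) (t - dist z₁ z₂ / 2 + log 4) := by
  rintro w ⟨h₁, h₂⟩
  rw [Metric.mem_closedBall] at h₁ h₂ ⊢
  have ht : 0 ≤ t := dist_nonneg.trans h₁
  have hr : dist z₁ z₂ ≤ 2 * t := by linarith [dist_triangle_left z₁ z₂ w]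
  have hρ : 0 ≤ t - dist z₁ z₂ / 2 + log 4 := by linarith [log_pos (by norm_num : (1 : ℝ) < 4)]
  have hexp : exp (t - dist z₁ z₂ / 2 + log 4) = 4 * exp t / exp (dist z₁ z₂ / 2) := by
    rw [exp_add, exp_sub, exp_log (by norm_num)]
    ring
  suffices cosh (dist w (hypMidpoint z₁ z₂)) ≤ cosh (t - dist z₁ z₂ / 2 + log 4) by
    rwa [cosh_le_cosh, abs_of_nonneg dist_nonneg, abs_of_nonneg hρ] at this
  calc cosh (dist w (hypMidpoint z₁ z₂))
      ≤ cosh t / cosh (dist z₁ z₂ / 2) := cosh_dist_hypMidpoint_le h₁ h₂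
    _ ≤ exp t / (exp (dist z₁ z₂ / 2) / 2) := by
        gcongr
        · exact cosh_le_exp ht
        · exact exp_div_two_le_cosh _
    _ = exp (t - dist z₁ z₂ / 2 + log 4) / 2 := by rw [hexp]; ring
    _ ≤ cosh (t - dist z₁ z₂ / 2 + log 4) := exp_div_two_le_cosh _

/-- **Area of an intersection of hyperbolic balls.** There is a universal constant
`C > 0` such that for all `z₁, z₂` in the upper half-plane and all `t > 0`, the hyperbolic
area of the intersection of the closed hyperbolic balls of radius `t` centred at `z₁` and
`z₂` is at most `C * exp (t - d(z₁, z₂) / 2)`. -/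
theorem hyperbolic_ball_intersection_area :
    ∃ C : ℝ, 0 < C ∧
      ∀ (z₁ z₂ : ℍ) (t : ℝ), 0 < t →
        hypArea (Metric.closedBall z₁ t ∩ Metric.closedBall z₂ t) ≤
          ENNReal.ofReal (C * Real.exp (t - dist z₁ z₂ / 2)) := by
  refine ⟨16, by norm_num, fun z₁ z₂ t _ => ?_⟩
  calc hypArea (Metric.closedBall z₁ t ∩ Metric.closedBall z₂ t)
      ≤ hypArea (Metric.closedBall (hypMidpoint z₁ z₂) (t - dist z₁ z₂ / 2 + log 4)) :=
        measure_mono (inter_closedBall_subset_closedBall_hypMidpoint z₁ z₂ t)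
    _ ≤ ENNReal.ofReal (4 * exp (t - dist z₁ z₂ / 2 + log 4)) := hypArea_closedBall_le _ _
    _ = ENNReal.ofReal (16 * exp (t - dist z₁ z₂ / 2)) := by
        rw [exp_add, exp_log (by norm_num)]
        ring_nf
end
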